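/- arXiv:math/0502140 — 6 statements merged into one kernel-verified Lean document; each statement's English description precedes it below -/
import Mathlib

section
/- For all integers n ≥ 1, m ≥ 1 and k ≥ 2, the map (X, A) ↦ (k·X, A) is a group isomorphism from G_{n,m} onto the subgroup H_k = {(X, A) ∈ G_{n,m} : every entry of X is divisible by k}, and H_k is a proper subgroup of G_{n,m}; in particular G_{n,m} is isomorphic to a proper subgroup of itself (it is not coHopfian). -/
/-- The additive group of `n × m` integer matrices. -/
abbrev MatZ (n m : ℕ) := Matrix (Fin n) (Fin m) ℤ

/-- The action of `SL_n(ℤ)` on `Mat_{n×m}(ℤ)` by left multiplication, as a homomorphism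
into the automorphisms of the (multiplicatively written) additive group `Mat_{n×m}(ℤ)`. -/
def slAction (n m : ℕ) :
    Matrix.SpecialLinearGroup (Fin n) ℤ →* MulAut (Multiplicative (MatZ n m)) where
  toFun A :=
    AddEquiv.toMultiplicative
      { toFun := fun X => (A : Matrix (Fin n) (Fin n) ℤ) * X
        invFun := fun X => ((A⁻¹ : Matrix.SpecialLinearGroup (Fin n) ℤ) :
            Matrix (Fin n) (Fin n) ℤ) * X
        left_inv := fun X => by
          show _ * (_ * _) = _
          rw [← Matrix.mul_assoc, ← Matrix.SpecialLinearGroup.coe_mul, inv_mul_cancel,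
            Matrix.SpecialLinearGroup.coe_one, Matrix.one_mul]
        right_inv := fun X => by
          show _ * (_ * _) = _
          rw [← Matrix.mul_assoc, ← Matrix.SpecialLinearGroup.coe_mul, mul_inv_cancel,
            Matrix.SpecialLinearGroup.coe_one, Matrix.one_mul]
        map_add' := fun X Y => Matrix.mul_add _ _ _ }
  map_one' := by
    ext X : 1
    exact congrArg Multiplicative.ofAdd (Matrix.one_mul _)
  map_mul' A B := by
    ext X : 1
    show Multiplicative.ofAdd (((A * B : Matrix.SpecialLinearGroup (Fin n) ℤ) :
        Matrix (Fin n) (Fin n) ℤ) * Multiplicative.toAdd X) = Multiplicative.ofAdd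
        ((A : Matrix (Fin n) (Fin n) ℤ) * ((B : Matrix (Fin n) (Fin n) ℤ) * Multiplicative.toAdd X))
    rw [Matrix.SpecialLinearGroup.coe_mul, Matrix.mul_assoc]

/-- The group `G_{n,m} = SL_n(ℤ) ⋉ Mat_{n×m}(ℤ)`. -/
abbrev GG (n m : ℕ) :=
  SemidirectProduct (Multiplicative (MatZ n m)) (Matrix.SpecialLinearGroup (Fin n) ℤ)
    (slAction n m)

/-! Multiplication by `k` on `Mat_{n×m}(ℤ)` is injective and commutes with left multiplication by
`SL_n(ℤ)`, so together with the identity on `SL_n(ℤ)` it induces an injective endomorphism of the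
semidirect product, whose image is `H_k`. The element with the all-ones matrix lies outside `H_k`. -/

namespace SemidirectProduct

variable {N₁ G₁ N₂ G₂ : Type*} [Group N₁] [Group G₁] [Group N₂] [Group G₂]
  {φ₁ : G₁ →* MulAut N₁} {φ₂ : G₂ →* MulAut N₂} {fn : N₁ →* N₂} {fg : G₁ →* G₂}
  {h : ∀ g : G₁, fn.comp (φ₁ g).toMonoidHom = (φ₂ (fg g)).toMonoidHom.comp fn}

theorem map_injective (hn : Function.Injective fn) (hg : Function.Injective fg) :
    Function.Injective (map fn fg h) := fun _ _ hxy =>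
  SemidirectProduct.ext (hn congr(($hxy).left)) (hg congr(($hxy).right))

theorem mem_range_map {x : N₂ ⋊[φ₂] G₂} :
    x ∈ (map fn fg h).range ↔ x.left ∈ fn.range ∧ x.right ∈ fg.range := by
  refine ⟨?_, ?_⟩
  · rintro ⟨y, rfl⟩
    exact ⟨⟨y.left, rfl⟩, ⟨y.right, rfl⟩⟩
  · rintro ⟨⟨a, ha⟩, ⟨b, hb⟩⟩
    exact ⟨⟨a, b⟩, SemidirectProduct.ext ha hb⟩

end SemidirectProduct

theorem Matrix.forall_dvd_iff_exists_smul_eq {ι κ R : Type*} [Semigroup R] (k : R)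
    (X : Matrix ι κ R) :
    (∀ i j, k ∣ X i j) ↔ ∃ Y : Matrix ι κ R, k • Y = X := by
  refine ⟨fun h => ?_, ?_⟩
  · choose Y hY using h
    exact ⟨Matrix.of Y, funext₂ fun i j => (hY i j).symm⟩
  · rintro ⟨Y, rfl⟩ i j
    exact ⟨Y i j, rfl⟩

def scaleHom (n m : ℕ) (k : ℤ) : Multiplicative (MatZ n m) →* Multiplicative (MatZ n m) :=
  AddMonoidHom.toMultiplicative (zsmulAddGroupHom k)

theorem scaleHom_injective (n m : ℕ) {k : ℤ} (hk : k ≠ 0) : Function.Injective (scaleHom n m k) :=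
  fun _ _ h => congrArg Multiplicative.ofAdd
    (smul_right_injective (MatZ n m) hk (congrArg Multiplicative.toAdd h))

theorem scaleHom_comp_slAction (n m : ℕ) (k : ℤ) (A : Matrix.SpecialLinearGroup (Fin n) ℤ) :
    (scaleHom n m k).comp (slAction n m A).toMonoidHom =
      (slAction n m A).toMonoidHom.comp (scaleHom n m k) :=
  MonoidHom.ext fun X =>
    congrArg Multiplicative.ofAdd (Matrix.mul_smul (A : Matrix (Fin n) (Fin n) ℤ) k X.toAdd).symm

def scale (n m : ℕ) (k : ℤ) : GG n m →* GG n m :=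
  SemidirectProduct.map (scaleHom n m k) (MonoidHom.id _) (scaleHom_comp_slAction n m k)

theorem scale_injective (n m : ℕ) {k : ℤ} (hk : k ≠ 0) : Function.Injective (scale n m k) :=
  SemidirectProduct.map_injective (scaleHom_injective n m hk) Function.injective_id

theorem mem_range_scale_iff (n m : ℕ) (k : ℤ) (g : GG n m) :
    g ∈ (scale n m k).range ↔ ∀ i j, k ∣ Multiplicative.toAdd g.left i j := by
  rw [scale, SemidirectProduct.mem_range_map, Matrix.forall_dvd_iff_exists_smul_eq]
  exact ⟨fun h => h.1, fun h => ⟨h, g.right, rfl⟩⟩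

theorem range_scale_ne_top (n m : ℕ) [NeZero n] [NeZero m] {k : ℤ} (hk : ¬ IsUnit k) :
    (scale n m k).range ≠ ⊤ := by
  intro htop
  have h := (mem_range_scale_iff n m k ⟨Multiplicative.ofAdd (Matrix.of fun _ _ => 1), 1⟩).1
    (htop ▸ Subgroup.mem_top _) 0 0
  exact hk (isUnit_of_dvd_one h)

/-- For `n, m ≥ 1` and `k ≥ 2`, the map `(X, A) ↦ (k·X, A)` is a group isomorphism from
`G_{n,m} = SL_n(ℤ) ⋉ Mat_{n×m}(ℤ)` onto the subgroup
`H_k = {(X, A) : k divides every entry of X}`, and `H_k` is a proper subgroup; in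
particular `G_{n,m}` is isomorphic to a proper subgroup of itself (it is not coHopfian). -/
theorem stmt_0 (n m k : ℕ) (hn : 1 ≤ n) (hm : 1 ≤ m) (hk : 2 ≤ k) :
    ∃ H : Subgroup (GG n m),
      (H : Set (GG n m)) =
        {g : GG n m | ∀ (i : Fin n) (j : Fin m), (k : ℤ) ∣ Multiplicative.toAdd g.left i j} ∧
      H ≠ ⊤ ∧
      ∃ e : GG n m ≃* H,
        ∀ g : GG n m,
          Multiplicative.toAdd ((e g : GG n m)).left
              = (k : ℤ) • Multiplicative.toAdd g.left ∧
          ((e g : GG n m)).right = g.right := by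
  have : NeZero n := ⟨by omega⟩
  have : NeZero m := ⟨by omega⟩
  have hk₀ : (k : ℤ) ≠ 0 := by omega
  have hk₁ : ¬ IsUnit (k : ℤ) := by rw [Int.isUnit_iff]; omega
  exact ⟨(scale n m k).range, Set.ext fun g => mem_range_scale_iff n m k g,
    range_scale_ne_top n m hk₁, MonoidHom.ofInjective (scale_injective n m hk₀),
    fun g => ⟨rfl, rfl⟩⟩
end

section
/- For all integers n ≥ 3 and m ≥ 2, the outer automorphism group Out(G_{n,m}) is infinite. -/
open Matrix

theorem Subgroup.infinite_quotient_of_comap_eq_bot {G K : Type*} [Group G] [Group K] [Infinite K]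
    (H : Subgroup G) (f : K →* G) (hf : H.comap f = ⊥) : Infinite (G ⧸ H) := by
  refine Infinite.of_injective (fun k => (f k : G ⧸ H)) fun a b hab => ?_
  have hmem : a⁻¹ * b ∈ H.comap f := by
    simpa [Subgroup.mem_comap] using QuotientGroup.eq.mp hab
  rw [hf, Subgroup.mem_bot, inv_mul_eq_one] at hmem
  exact hmem

namespace SemidirectProduct

variable {N G H : Type*} [Group G] [Group H]

section Group

variable [Group N] {φ : G →* MulAut N}

def autOfCommute (ψ : H →* MulAut N) (hψ : ∀ h g, Commute (ψ h) (φ g)) :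
    H →* MulAut (N ⋊[φ] G) where
  toFun h := congr (ψ h) (MulEquiv.refl G) fun g => by
    ext x
    exact DFunLike.congr_fun (hψ h g) x
  map_one' := by ext <;> simp
  map_mul' h h' := by ext <;> simp

@[simp]
theorem autOfCommute_inl (ψ : H →* MulAut N) (hψ : ∀ h g, Commute (ψ h) (φ g)) (h : H) (x : N) :
    autOfCommute ψ hψ h (inl x) = inl (ψ h x) := by
  ext <;> simp [autOfCommute]

end Group

variable [CommGroup N] {φ : G →* MulAut N}

theorem conj_inl (g : N ⋊[φ] G) (x : N) : MulAut.conj g (inl x) = inl (φ g.right x) := by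
  ext <;> simp [mul_comm]

theorem exists_eq_of_autOfCommute_mem_range {ψ : H →* MulAut N}
    {hψ : ∀ h g, Commute (ψ h) (φ g)} {h : H}
    (hh : autOfCommute ψ hψ h ∈ (MulAut.conj (G := N ⋊[φ] G)).range) : ∃ g, ψ h = φ g := by
  obtain ⟨g, hg⟩ := hh
  refine ⟨g.right, MulEquiv.ext fun x => ?_⟩
  have hx := DFunLike.congr_fun hg (inl x)
  rw [conj_inl, autOfCommute_inl] at hx
  exact (inl_injective hx).symm

end SemidirectProduct

namespace Matrix

variable {m R : Type*} [Fintype m] [DecidableEq m]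

def rightMulAut (l : Type*) [Semiring R] :
    GL m R →* MulAut (Multiplicative (Matrix l m R)) where
  toFun S := AddEquiv.toMultiplicative
    { toFun := fun X => X * (↑S⁻¹ : Matrix m m R)
      invFun := fun X => X * (↑S : Matrix m m R)
      left_inv := fun X => by simp [Matrix.mul_assoc]
      right_inv := fun X => by simp [Matrix.mul_assoc]
      map_add' := fun X Y => Matrix.add_mul _ _ _ }
  map_one' := by ext; simp
  map_mul' S T := by ext; simp [Matrix.mul_assoc]

@[simp]
theorem rightMulAut_apply {l : Type*} [Semiring R] (S : GL m R) (X : Multiplicative (Matrix l m R)) :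
    rightMulAut l S X = .ofAdd (X.toAdd * (↑S⁻¹ : Matrix m m R)) :=
  rfl

theorem apply_eq_zero_of_forall_mul_eq_mul {l : Type*} [Fintype l] [DecidableEq l] [Nonempty l]
    [Semiring R] {A : Matrix l l R} {T : Matrix m m R} (h : ∀ X : Matrix l m R, A * X = X * T)
    {i j : m} (hij : i ≠ j) : T i j = 0 := by
  obtain ⟨r⟩ := ‹Nonempty l›
  have hrj := congrFun (congrFun (h (single r i 1)) r) j
  simpa [hij.symm, single_mul_apply_same] using hrj.symm

def transvectionHom [CommRing R] {i j : m} (hij : i ≠ j) : Multiplicative R →* GL m R where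
  toFun k := ⟨transvection i j k.toAdd, transvection i j (-k.toAdd),
    by simp [transvection_mul_transvection_same _ _ hij],
    by simp [transvection_mul_transvection_same _ _ hij]⟩
  map_one' := by ext : 1; simp
  map_mul' k k' := by ext : 1; simp [transvection_mul_transvection_same _ _ hij]

@[simp]
theorem coe_transvectionHom_inv [CommRing R] {i j : m} (hij : i ≠ j) (k : Multiplicative R) :
    (↑(transvectionHom hij k)⁻¹ : Matrix m m R) = transvection i j (-k.toAdd) :=
  rfl

end Matrix

@[simp]
theorem slAction_apply (n m : ℕ) (A : Matrix.SpecialLinearGroup (Fin n) ℤ)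
    (X : Multiplicative (MatZ n m)) :
    slAction n m A X = .ofAdd ((A : Matrix (Fin n) (Fin n) ℤ) * X.toAdd) :=
  rfl

theorem slAction_commute_rightMulAut (n m : ℕ) (S : GL (Fin m) ℤ)
    (A : Matrix.SpecialLinearGroup (Fin n) ℤ) :
    Commute (rightMulAut (Fin n) S) (slAction n m A) := by
  ext X
  simp [Matrix.mul_assoc]

/-- For `n ≥ 3` and `m ≥ 2`, the outer automorphism group of
`G_{n,m} = SL_n(ℤ) ⋉ Mat_{n×m}(ℤ)` — the quotient of `Aut(G_{n,m})` by the inner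
automorphisms (the range of `MulAut.conj`) — is infinite. -/
theorem stmt_4 (n m : ℕ) (hn : 3 ≤ n) (hm : 2 ≤ m) :
    Infinite (MulAut (GG n m) ⧸ (MulAut.conj (G := GG n m)).range) := by
  have : Nonempty (Fin n) := Fin.pos_iff_nonempty.mp (by omega)
  obtain ⟨i, j, hij⟩ := (Fin.nontrivial_iff_two_le.mpr hm).exists_pair_ne
  refine Subgroup.infinite_quotient_of_comap_eq_bot _
    ((SemidirectProduct.autOfCommute (rightMulAut (Fin n)) (slAction_commute_rightMulAut n m)).comp
      (transvectionHom hij)) ?_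
  refine (Subgroup.eq_bot_iff_forall _).mpr fun k hk => ?_
  rw [Subgroup.mem_comap, MonoidHom.comp_apply] at hk
  obtain ⟨A, hA⟩ := SemidirectProduct.exists_eq_of_autOfCommute_mem_range hk
  have hAX (X : MatZ n m) :
      (A : Matrix (Fin n) (Fin n) ℤ) * X = X * transvection i j (-k.toAdd) := by
    have hX := congrArg Multiplicative.toAdd (DFunLike.congr_fun hA (.ofAdd X))
    simp only [rightMulAut_apply, coe_transvectionHom_inv, slAction_apply, toAdd_ofAdd] at hX
    exact hX.symm
  simpa [transvection, hij] using apply_eq_zero_of_forall_mul_eq_mul hAX hij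
end

section
/- Let Γ be a finitely presented group and Z a finitely generated subgroup of the center of Γ. Then the quotient group Γ/Z is finitely presented. -/
/-!
Adjoining lifts of finitely many generators of `Z` to the relators of a finite presentation of
`Γ` presents `Γ/Z`: since `Z` is normal, those generators also generate it as a normal subgroup.
-/

def IsFinitelyPresented (G : Type*) [Group G] : Prop :=
  ∃ (S : Type) (_ : Finite S) (R : Set (FreeGroup S)),
    R.Finite ∧ Nonempty (PresentedGroup R ≃* G)

theorem normal_of_le_center' {G : Type*} [Group G] {H : Subgroup G}
    (h : H ≤ Subgroup.center G) : H.Normal := by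
  constructor
  intro x hx g
  have hc : g * x = x * g := Subgroup.mem_center_iff.mp (h hx) g
  have : g * x * g⁻¹ = x := by rw [hc, mul_inv_cancel_right]
  rwa [this]

theorem isFinitelyPresented_iff_group_isFinitelyPresented {G : Type*} [Group G] :
    IsFinitelyPresented G ↔ Group.IsFinitelyPresented G := by
  constructor
  · rintro ⟨S, _, R, hR, ⟨e⟩⟩
    have : Finite R := hR
    exact Group.IsFinitelyPresented.equiv e
  · intro _
    obtain ⟨n, R, hR, ⟨e⟩⟩ := Group.IsFinitelyPresented.exists_mulEquiv_presentedGroup (G := G)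
    exact ⟨Fin n, inferInstance, R, hR, ⟨e.symm⟩⟩

/-- Let `Γ` be a finitely presented group and `Z` a finitely generated subgroup of the
centre of `Γ`.  Then the quotient group `Γ/Z` is finitely presented. -/
theorem stmt_6 {Γ : Type*} [Group Γ] (Z : Subgroup Γ) (hZ : Z ≤ Subgroup.center Γ)
    (hfg : Z.FG) (hΓ : IsFinitelyPresented Γ) :
    haveI : Z.Normal := normal_of_le_center' hZ
    IsFinitelyPresented (Γ ⧸ Z) := by
  have : Z.Normal := normal_of_le_center' hZ
  have : Group.FG Z := (Group.fg_iff_subgroup_fg Z).mpr hfg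
  have := isFinitelyPresented_iff_group_isFinitelyPresented.mp hΓ
  exact isFinitelyPresented_iff_group_isFinitelyPresented.mpr
    (Group.IsFinitelyPresented.quotient Z (.of_FG Z))
end

section
/- The kernel of d2 equals the K-span of S1 ∪ S2 ∪ S3 ∪ S4 ∪ S5 ∪ S6. -/
attribute [local instance 100] LieRing.ofAssociativeRing

/-- Index type with four consecutive blocks of sizes `n 0, n 1, n 2, n 3`
(corresponding to the partition `I1 ⊔ I2 ⊔ I3 ⊔ I4` of `{1, …, N}`). -/
abbrev BIdx (n : Fin 4 → ℕ) := Σ a : Fin 4, Fin (n a)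

/-- The Lie algebra `𝔲` of strictly block upper triangular matrices. -/
def uLie (n : Fin 4 → ℕ) (K : Type*) [Field K] :
    LieSubalgebra K (Matrix (BIdx n) (BIdx n) K) where
  carrier := {M | ∀ (a b : Fin 4) (i : Fin (n a)) (j : Fin (n b)), b ≤ a → M ⟨a, i⟩ ⟨b, j⟩ = 0}
  add_mem' := by
    intro x y hx hy a b i j h
    simp [Matrix.add_apply, hx a b i j h, hy a b i j h]
  zero_mem' := by intro a b i j h; simp
  smul_mem' := by
    intro c x hx a b i j h
    simp [Matrix.smul_apply, hx a b i j h]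
  lie_mem' := by
    intro x y hx hy a b i j h
    have key : ∀ u v : Matrix (BIdx n) (BIdx n) K,
        (∀ (a b : Fin 4) (i : Fin (n a)) (j : Fin (n b)), b ≤ a → u ⟨a, i⟩ ⟨b, j⟩ = 0) →
        (∀ (a b : Fin 4) (i : Fin (n a)) (j : Fin (n b)), b ≤ a → v ⟨a, i⟩ ⟨b, j⟩ = 0) →
        (u * v) ⟨a, i⟩ ⟨b, j⟩ = 0 := by
      intro u v hu hv
      rw [Matrix.mul_apply]
      apply Finset.sum_eq_zero
      rintro ⟨c, kk⟩ -
      by_cases hc : c ≤ a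
      · rw [hu a c i kk hc, zero_mul]
      · rw [hv c b kk j (h.trans (le_of_not_ge hc)), mul_zero]
    rw [Ring.lie_def, Matrix.sub_apply, key x y hx hy, key y x hy hx, sub_zero]

/-- The type of elements of `𝔲`. -/
abbrev UU (n : Fin 4 → ℕ) (K : Type*) [Field K] := ↥(uLie n K)

/-- `x ∧ y`, as an element of the second exterior power `⋀[K]^2 𝔲`. -/
noncomputable def wedge {n : Fin 4 → ℕ} {K : Type*} [Field K] (x y : UU n K) :
    ↥(⋀[K]^2 (UU n K)) :=
  ⟨ExteriorAlgebra.ιMulti K 2 ![x, y], ExteriorAlgebra.ιMulti_range K 2 ⟨![x, y], rfl⟩⟩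

/-- `x` is supported on the `(a, b)` block. -/
def inBlock {n : Fin 4 → ℕ} {K : Type*} [Field K] (a b : Fin 4) (x : UU n K) : Prop :=
  ∀ (c d : Fin 4) (i : Fin (n c)) (j : Fin (n d)), ¬(c = a ∧ d = b) →
    (x : Matrix (BIdx n) (BIdx n) K) ⟨c, i⟩ ⟨d, j⟩ = 0

/-- The image of the Chevalley–Eilenberg differential `d3 : Λ³𝔲 → Λ²𝔲`: the span of all
`z ∧ [x,y] + y ∧ [z,x] + x ∧ [y,z]`. -/
noncomputable def Imd3 (n : Fin 4 → ℕ) (K : Type*) [Field K] :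
    Submodule K ↥(⋀[K]^2 (UU n K)) :=
  Submodule.span K
    {w | ∃ x y z : UU n K, w = wedge z ⁅x, y⁆ + wedge y ⁅z, x⁆ + wedge x ⁅y, z⁆}

/-- The matrix unit `e_{x y}` for `x` in block `a`, `y` in block `b`, `a < b`, as an
element of `𝔲`. -/
def eU {n : Fin 4 → ℕ} {K : Type*} [Field K] (a b : Fin 4) (h : a < b)
    (i : Fin (n a)) (j : Fin (n b)) : UU n K :=
  ⟨Matrix.single ⟨a, i⟩ ⟨b, j⟩ 1, by
    intro c d k l hdc
    rw [Matrix.single, Matrix.of_apply, if_neg]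
    rintro ⟨h1, h2⟩
    have hac : a = c := congrArg Sigma.fst h1
    have hbd : b = d := congrArg Sigma.fst h2
    rw [← hac, ← hbd] at hdc
    exact absurd hdc (not_le.mpr h)⟩

variable {n : Fin 4 → ℕ} {K : Type*} [Field K]

/-- The matrix unit `e_{i1 j2}` (blocks `I1 → I2`, i.e. `(0,1)`). -/
def e01 (i : Fin (n 0)) (j : Fin (n 1)) : UU n K := eU 0 1 (by decide) i j

/-- The matrix unit `e_{i1 j3}` (blocks `I1 → I3`, i.e. `(0,2)`). -/
def e02 (i : Fin (n 0)) (j : Fin (n 2)) : UU n K := eU 0 2 (by decide) i j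

/-- The matrix unit `e_{i1 j4}` (blocks `I1 → I4`, i.e. `(0,3)`). -/
def e03 (i : Fin (n 0)) (j : Fin (n 3)) : UU n K := eU 0 3 (by decide) i j

/-- The matrix unit `e_{i2 j3}` (blocks `I2 → I3`, i.e. `(1,2)`). -/
def e12 (i : Fin (n 1)) (j : Fin (n 2)) : UU n K := eU 1 2 (by decide) i j

/-- The matrix unit `e_{i2 j4}` (blocks `I2 → I4`, i.e. `(1,3)`). -/
def e13 (i : Fin (n 1)) (j : Fin (n 3)) : UU n K := eU 1 3 (by decide) i j

/-- The matrix unit `e_{i3 j4}` (blocks `I3 → I4`, i.e. `(2,3)`). -/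
def e23 (i : Fin (n 2)) (j : Fin (n 3)) : UU n K := eU 2 3 (by decide) i j

/-- The set of wedges `x ∧ y` with `x` supported on block `(a,b)` and `y` supported on
block `(c,d)`. -/
noncomputable def wSet (n : Fin 4 → ℕ) (K : Type*) [Field K] (a b c d : Fin 4) :
    Set ↥(⋀[K]^2 (UU n K)) :=
  {w | ∃ x y : UU n K, inBlock a b x ∧ inBlock c d y ∧ w = wedge x y}

/-- The set `S1` (elements (1) of the Lemma). -/
noncomputable def S1 (n : Fin 4 → ℕ) (K : Type*) [Field K] : Set ↥(⋀[K]^2 (UU n K)) :=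
  wSet n K 0 1 0 1 ∪ wSet n K 1 2 1 2 ∪ wSet n K 2 3 2 3 ∪ wSet n K 0 2 1 2 ∪
    wSet n K 1 2 1 3 ∪ wSet n K 0 1 0 2 ∪ wSet n K 1 3 2 3 ∪ wSet n K 0 1 2 3

/-- The set `S2` (elements (2) of the Lemma). -/
noncomputable def S2 (n : Fin 4 → ℕ) (K : Type*) [Field K] : Set ↥(⋀[K]^2 (UU n K)) :=
  {w | ∃ x y : UU n K, inBlock 0 3 x ∧ w = wedge x y} ∪ wSet n K 0 2 0 2 ∪
    wSet n K 1 3 1 3 ∪ wSet n K 0 2 1 3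

/-- The set `S3` (elements (3) of the Lemma). -/
noncomputable def S3 (n : Fin 4 → ℕ) (K : Type*) [Field K] : Set ↥(⋀[K]^2 (UU n K)) :=
  {w | ∃ (i : Fin (n 0)) (j k : Fin (n 1)) (l : Fin (n 2)), j ≠ k ∧
      w = wedge (e01 (K := K) i j) (e12 k l)} ∪
    {w | ∃ (i : Fin (n 1)) (j k : Fin (n 2)) (l : Fin (n 3)), j ≠ k ∧
      w = wedge (e12 (K := K) i j) (e23 k l)}

/-- The set `S4` (elements (4) of the Lemma). -/
noncomputable def S4 (n : Fin 4 → ℕ) (K : Type*) [Field K] : Set ↥(⋀[K]^2 (UU n K)) :=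
  {w | ∃ (i : Fin (n 0)) (j k : Fin (n 1)) (l : Fin (n 3)), j ≠ k ∧
      w = wedge (e01 (K := K) i j) (e13 k l)} ∪
    {w | ∃ (i : Fin (n 0)) (j k : Fin (n 2)) (l : Fin (n 3)), j ≠ k ∧
      w = wedge (e02 (K := K) i j) (e23 k l)}

/-- The set `S5` (elements (5) of the Lemma). -/
noncomputable def S5 (n : Fin 4 → ℕ) (K : Type*) [Field K] : Set ↥(⋀[K]^2 (UU n K)) :=
  {w | ∃ (i : Fin (n 0)) (kk : Fin (n 2)) (α : Fin (n 1) → K), (∑ j, α j) = 0 ∧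
      w = ∑ j, α j • wedge (e01 (K := K) i j) (e12 j kk)} ∪
    {w | ∃ (i : Fin (n 1)) (kk : Fin (n 3)) (α : Fin (n 2) → K), (∑ j, α j) = 0 ∧
      w = ∑ j, α j • wedge (e12 (K := K) i j) (e23 j kk)}

/-- The set `S6` (elements (6) of the Lemma). -/
noncomputable def S6 (n : Fin 4 → ℕ) (K : Type*) [Field K] : Set ↥(⋀[K]^2 (UU n K)) :=
  {w | ∃ (i : Fin (n 0)) (kk : Fin (n 3)) (α : Fin (n 1) → K) (β : Fin (n 2) → K),
    (∑ j, α j) + (∑ j, β j) = 0 ∧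
    w = (∑ j, α j • wedge (e01 (K := K) i j) (e13 j kk)) +
      ∑ j, β j • wedge (e02 (K := K) i j) (e23 j kk)}

/-!
`span S ⊆ ker d2` is a direct computation with `[e_{pq}, e_{rs}] = δ_{qr} e_{ps}`. Conversely,
every wedge `e_{pq} ∧ e_{rs}` of matrix units of `𝔲` lies in `span S`, except when the two units
chain (`q = r` or `s = p`); a chained wedge with mismatched middle indices is in `S3`/`S4`, and
with matching middle index it is congruent modulo `S5`/`S6` to a pivot wedge
`e_{i₁ j₀} ∧ e_{j₀ k₃}`, `e_{i₂ k₀} ∧ e_{k₀ ℓ₄}` or `e_{i₁ j₀} ∧ e_{j₀ ℓ₄}` for fixed `j₀ ∈ I₂`,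
`k₀ ∈ I₃`. So `span S` and the span `W` of the pivot wedges together span `Λ²𝔲`. `d2` sends the
pivot wedges to minus distinct matrix units, so `W ∩ ker d2 = 0`, and the modular law gives
`ker d2 = span S`.
-/

open Submodule

lemma Submodule.mem_sup_of_sub_mem {R M : Type*} [Ring R] [AddCommGroup M] [Module R M]
    {P Q : Submodule R M} {x y : M} (h : x - y ∈ P) (hy : y ∈ Q) : x ∈ P ⊔ Q := by
  simpa using add_mem (mem_sup_left h) (mem_sup_right hy : y ∈ P ⊔ Q)

lemma sum_pi_single_smul {R ι M : Type*} [Semiring R] [Fintype ι] [DecidableEq ι]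
    [AddCommMonoid M] [Module R M] (f : ι → M) (j : ι) :
    ∑ m, (Pi.single j 1 : ι → R) m • f m = f j := by
  simp [Pi.single_apply]

lemma LinearMap.ker_eq_of_sup_eq_top {R M N : Type*} [Ring R] [AddCommGroup M] [AddCommGroup N]
    [Module R M] [Module R N] {f : M →ₗ[R] N} {P Q : Submodule R M} (hP : P ≤ ker f)
    (hQ : Disjoint Q (ker f)) (hPQ : P ⊔ Q = ⊤) : ker f = P :=
  calc ker f = (P ⊔ Q) ⊓ ker f := by rw [hPQ, top_inf_eq]
    _ = P ⊔ Q ⊓ ker f := sup_inf_assoc_of_le Q hP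
    _ = P := by rw [hQ.eq_bot, sup_bot_eq]

lemma lt_cases_fin_four {a b : Fin 4} (h : a < b) :
    a = 0 ∧ b = 1 ∨ a = 0 ∧ b = 2 ∨ a = 0 ∧ b = 3 ∨ a = 1 ∧ b = 2 ∨ a = 1 ∧ b = 3 ∨
      a = 2 ∧ b = 3 := by
  revert a b; decide

section Wedge

lemma wedge_coe (x y : UU n K) :
    (wedge x y : ExteriorAlgebra K (UU n K)) =
      ExteriorAlgebra.ι K x * ExteriorAlgebra.ι K y := by
  simp [wedge, ExteriorAlgebra.ιMulti_apply]

variable (n K) in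
noncomputable def wedgeₗ : UU n K →ₗ[K] UU n K →ₗ[K] ⋀[K]^2 (UU n K) :=
  LinearMap.mk₂ K wedge
    (fun _ _ _ => Subtype.ext (by simp [wedge_coe, add_mul]))
    (fun _ _ _ => Subtype.ext (by simp [wedge_coe]))
    (fun _ _ _ => Subtype.ext (by simp [wedge_coe, mul_add]))
    (fun _ _ _ => Subtype.ext (by simp [wedge_coe]))

lemma wedge_swap (x y : UU n K) : wedge y x = -wedge x y :=
  Subtype.ext <| by
    simpa [wedge_coe] using eq_neg_of_add_eq_zero_left (ExteriorAlgebra.ι_add_mul_swap y x)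

lemma span_wedge_eq_top :
    span K {w : ⋀[K]^2 (UU n K) | ∃ x y, w = wedge x y} = ⊤ := by
  refine eq_top_iff.mpr <| (exteriorPower.ιMulti_span K 2 (UU n K)).symm.le.trans <| span_mono ?_
  rintro _ ⟨v, rfl⟩
  refine ⟨v 0, v 1, Subtype.ext ?_⟩
  simp only [exteriorPower.ιMulti_apply_coe, wedge]
  congr 1
  ext i
  fin_cases i <;> rfl

lemma eq_top_of_wedge_mem {s : Set (UU n K)} (hs : span K s = ⊤)
    {P : Submodule K (⋀[K]^2 (UU n K))} (hP : ∀ x ∈ s, ∀ y ∈ s, wedge x y ∈ P) : P = ⊤ := by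
  refine eq_top_iff.mpr <| span_wedge_eq_top.symm.le.trans <| span_le.mpr ?_
  rintro _ ⟨x, y, rfl⟩
  have hxy : wedgeₗ n K x y ∈ map₂ (wedgeₗ n K) (span K s) (span K s) :=
    apply_mem_map₂ _ (hs ▸ mem_top) (hs ▸ mem_top)
  rw [map₂_span_span] at hxy
  refine span_le.mpr ?_ hxy
  rintro _ ⟨x, hx, y, hy, rfl⟩
  exact hP x hx y hy

end Wedge

section MatrixUnits

variable {a b c d : Fin 4}

lemma coe_lie_uLie (x y : UU n K) :
    ((⁅x, y⁆ : UU n K) : Matrix (BIdx n) (BIdx n) K) =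
      (x : Matrix (BIdx n) (BIdx n) K) * y - (y : Matrix (BIdx n) (BIdx n) K) * x := by
  rw [LieSubalgebra.coe_bracket, Ring.lie_def]

lemma inBlock_eU (hab : a < b) (i : Fin (n a)) (j : Fin (n b)) :
    inBlock a b (eU a b hab i j : UU n K) := by
  rintro c d k l hcd
  refine Matrix.single_apply_of_ne _ _ _ _ _ ?_
  rintro ⟨⟨⟩, ⟨⟩⟩
  exact hcd ⟨rfl, rfl⟩

lemma coe_eU (hab : a < b) (i : Fin (n a)) (j : Fin (n b)) :
    ((eU a b hab i j : UU n K) : Matrix (BIdx n) (BIdx n) K) = Matrix.single ⟨a, i⟩ ⟨b, j⟩ 1 :=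
  rfl

lemma eU_lie_eU (hab : a < b) (hbc : b < c) (i : Fin (n a)) (j k : Fin (n b))
    (l : Fin (n c)) :
    ⁅(eU a b hab i j : UU n K), eU b c hbc k l⁆ =
      if j = k then eU a c (hab.trans hbc) i l else (0 : UU n K) := by
  apply Subtype.ext
  have hca : (⟨c, l⟩ : BIdx n) ≠ ⟨a, i⟩ := fun h => (hab.trans hbc).ne' congr(($h).1)
  rw [coe_lie_uLie, coe_eU, coe_eU, Matrix.single_mul_single_of_ne _ _ _ _ hca, sub_zero]
  split_ifs with hjk
  · rw [hjk, Matrix.single_mul_single_same, one_mul]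
    rfl
  · exact Matrix.single_mul_single_of_ne _ _ _ _ (by simpa using hjk) _

lemma mul_eq_zero_of_inBlock_left {x : UU n K} (hx : inBlock a b x)
    {y : Matrix (BIdx n) (BIdx n) K} (hy : ∀ j q, y ⟨b, j⟩ q = 0) :
    (x : Matrix (BIdx n) (BIdx n) K) * y = 0 := by
  ext p r
  rw [Matrix.mul_apply, Matrix.zero_apply]
  refine Finset.sum_eq_zero ?_
  rintro ⟨e, q⟩ -
  by_cases he : e = b
  · subst he
    rw [hy, mul_zero]
  · rw [hx _ _ _ _ fun h => he h.2, zero_mul]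

lemma mul_eq_zero_of_inBlock_right {y : UU n K} (hy : inBlock c d y)
    {x : Matrix (BIdx n) (BIdx n) K} (hx : ∀ p k, x p ⟨c, k⟩ = 0) :
    x * (y : Matrix (BIdx n) (BIdx n) K) = 0 := by
  ext p r
  rw [Matrix.mul_apply, Matrix.zero_apply]
  refine Finset.sum_eq_zero ?_
  rintro ⟨e, q⟩ -
  by_cases he : e = c
  · subst he
    rw [hx, zero_mul]
  · rw [hy _ _ _ _ fun h => he h.1, mul_zero]

lemma lie_eq_zero_of_inBlock {x y : UU n K} (hx : inBlock a b x) (hy : inBlock c d y)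
    (hbc : b ≠ c) (hda : d ≠ a) : ⁅x, y⁆ = 0 :=
  Subtype.ext <| by
    rw [coe_lie_uLie, mul_eq_zero_of_inBlock_left hx fun _ _ => hy _ _ _ _ fun h => hbc h.1,
      mul_eq_zero_of_inBlock_left hy fun _ _ => hx _ _ _ _ fun h => hda h.1, sub_zero]
    rfl

lemma lie_eq_zero_of_inBlock_zero_three {x : UU n K} (hx : inBlock 0 3 x) (y : UU n K) :
    ⁅x, y⁆ = 0 :=
  Subtype.ext <| by
    rw [coe_lie_uLie, mul_eq_zero_of_inBlock_left hx fun _ _ => y.2 _ _ _ _ (Fin.le_last _),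
      mul_eq_zero_of_inBlock_right hx fun _ _ => y.2 _ _ _ _ (Fin.zero_le _), sub_zero]
    rfl

lemma span_eU_eq_top :
    span K {x : UU n K | ∃ a b h i j, x = eU a b h i j} = ⊤ := by
  refine eq_top_iff.mpr fun x _ => ?_
  have hx : x = ∑ p : BIdx n, ∑ q : BIdx n,
      if h : p.1 < q.1 then (x : Matrix (BIdx n) (BIdx n) K) p q • eU p.1 q.1 h p.2 q.2
      else 0 := by
    apply Subtype.ext
    conv_lhs => rw [Matrix.matrix_eq_sum_single (x : Matrix (BIdx n) (BIdx n) K)]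
    simp only [AddSubmonoidClass.coe_finsetSum]
    refine Finset.sum_congr rfl fun p _ => Finset.sum_congr rfl fun q _ => ?_
    split_ifs with h
    · simp [coe_eU, Matrix.smul_single]
    · rw [x.2 _ _ _ _ (not_lt.mp h), Matrix.single_zero]
      rfl
  rw [hx]
  refine sum_mem fun p _ => sum_mem fun q _ => ?_
  split_ifs with h
  · exact smul_mem _ _ (subset_span ⟨_, _, h, _, _, rfl⟩)
  · exact zero_mem _

end MatrixUnits

section Pivot

variable (n) in
abbrev PivotIdx := (Fin (n 0) × Fin (n 2)) ⊕ (Fin (n 1) × Fin (n 3)) ⊕ (Fin (n 0) × Fin (n 3))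

noncomputable def pivotWedge (j₀ : Fin (n 1)) (k₀ : Fin (n 2)) :
    PivotIdx n → ⋀[K]^2 (UU n K)
  | .inl (i, l) => wedge (e01 i j₀) (e12 j₀ l)
  | .inr (.inl (i, l)) => wedge (e12 i k₀) (e23 k₀ l)
  | .inr (.inr (i, l)) => wedge (e01 i j₀) (e13 j₀ l)

variable (K) in
noncomputable def pivotSpan (j₀ : Fin (n 1)) (k₀ : Fin (n 2)) :
    Submodule K (⋀[K]^2 (UU n K)) :=
  span K (Set.range (pivotWedge j₀ k₀))

noncomputable def pivotTarget : PivotIdx n → UU n K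
  | .inl (i, l) => e02 i l
  | .inr (.inl (i, l)) => e13 i l
  | .inr (.inr (i, l)) => e03 i l

def pivotPos : PivotIdx n → BIdx n × BIdx n
  | .inl (i, l) => (⟨0, i⟩, ⟨2, l⟩)
  | .inr (.inl (i, l)) => (⟨1, i⟩, ⟨3, l⟩)
  | .inr (.inr (i, l)) => (⟨0, i⟩, ⟨3, l⟩)

lemma pivotPos_injective : Function.Injective (pivotPos (n := n)) := by
  rintro (⟨i, l⟩ | ⟨i, l⟩ | ⟨i, l⟩) (⟨i', l'⟩ | ⟨i', l'⟩ | ⟨i', l'⟩) h <;> simp_all [pivotPos]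

lemma coe_pivotTarget (t : PivotIdx n) :
    ((pivotTarget t : UU n K) : Matrix (BIdx n) (BIdx n) K) =
      Matrix.stdBasis K (BIdx n) (BIdx n) (pivotPos t) := by
  rcases t with ⟨i, l⟩ | ⟨i, l⟩ | ⟨i, l⟩ <;> exact (Matrix.stdBasis_eq_single _ _ _).symm

lemma linearIndependent_pivotTarget : LinearIndependent K (pivotTarget (n := n) (K := K)) :=
  LinearIndependent.of_comp (uLie n K).incl.toLinearMap <| by
    rw [show ⇑(uLie n K).incl.toLinearMap ∘ pivotTarget = _ from funext coe_pivotTarget]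
    exact (Matrix.stdBasis K (BIdx n) (BIdx n)).linearIndependent.comp _ pivotPos_injective

end Pivot

section Kernel

variable {d2 : ⋀[K]^2 (UU n K) →ₗ[K] UU n K} {a b c d : Fin 4}

lemma wSet_subset_ker (hd2 : ∀ x y, d2 (wedge x y) = -⁅x, y⁆) (hbc : b ≠ c) (hda : d ≠ a) :
    wSet n K a b c d ⊆ LinearMap.ker d2 := by
  rintro _ ⟨x, y, hx, hy, rfl⟩
  rw [SetLike.mem_coe, LinearMap.mem_ker, hd2, lie_eq_zero_of_inBlock hx hy hbc hda, neg_zero]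

lemma d2_wedge_eU (hd2 : ∀ x y, d2 (wedge x y) = -⁅x, y⁆) (hab : a < b) (hbc : b < c)
    (i : Fin (n a)) (j k : Fin (n b)) (l : Fin (n c)) :
    d2 (wedge (eU a b hab i j) (eU b c hbc k l)) =
      if j = k then -eU a c (hab.trans hbc) i l else 0 := by
  rw [hd2, eU_lie_eU]
  split_ifs <;> simp

lemma d2_sum_smul_wedge_eU (hd2 : ∀ x y, d2 (wedge x y) = -⁅x, y⁆) (hab : a < b)
    (hbc : b < c) (i : Fin (n a)) (α : Fin (n b) → K) (l : Fin (n c)) :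
    d2 (∑ j, α j • wedge (eU a b hab i j) (eU b c hbc j l)) =
      -((∑ j, α j) • eU a c (hab.trans hbc) i l) := by
  simp [d2_wedge_eU hd2, Finset.sum_smul]

lemma S_subset_ker (hd2 : ∀ x y, d2 (wedge x y) = -⁅x, y⁆) :
    S1 n K ∪ S2 n K ∪ S3 n K ∪ S4 n K ∪ S5 n K ∪ S6 n K ⊆ LinearMap.ker d2 := by
  simp only [Set.union_subset_iff]
  refine ⟨⟨⟨⟨⟨?_, ?_⟩, ?_⟩, ?_⟩, ?_⟩, ?_⟩
  · simp only [S1, Set.union_subset_iff]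
    and_intros <;> exact wSet_subset_ker hd2 (by decide) (by decide)
  · simp only [S2, Set.union_subset_iff]
    refine ⟨⟨⟨?_, ?_⟩, ?_⟩, ?_⟩
    · rintro _ ⟨x, y, hx, rfl⟩
      simp [hd2, lie_eq_zero_of_inBlock_zero_three hx]
    all_goals exact wSet_subset_ker hd2 (by decide) (by decide)
  · rintro _ (⟨i, j, k, l, hjk, rfl⟩ | ⟨i, j, k, l, hjk, rfl⟩) <;>
      simp [e01, e12, e23, d2_wedge_eU hd2, hjk]
  · rintro _ (⟨i, j, k, l, hjk, rfl⟩ | ⟨i, j, k, l, hjk, rfl⟩) <;>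
      simp [e01, e02, e13, e23, d2_wedge_eU hd2, hjk]
  · rintro _ (⟨i, l, α, hα, rfl⟩ | ⟨i, l, α, hα, rfl⟩) <;>
      simp [e01, e12, e23, d2_sum_smul_wedge_eU hd2, hα]
  · rintro _ ⟨i, l, α, β, hαβ, rfl⟩
    simp only [e01, e02, e13, e23, SetLike.mem_coe, LinearMap.mem_ker, map_add,
      d2_sum_smul_wedge_eU hd2, ← neg_add, ← add_smul, hαβ, zero_smul, neg_zero]

lemma d2_pivotWedge (hd2 : ∀ x y, d2 (wedge x y) = -⁅x, y⁆) (j₀ : Fin (n 1)) (k₀ : Fin (n 2))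
    (t : PivotIdx n) : d2 (pivotWedge j₀ k₀ t) = -pivotTarget t := by
  rcases t with ⟨i, l⟩ | ⟨i, l⟩ | ⟨i, l⟩ <;>
    exact (d2_wedge_eU hd2 _ _ _ _ _ _).trans (if_pos rfl)

lemma disjoint_pivotSpan_ker (hd2 : ∀ x y, d2 (wedge x y) = -⁅x, y⁆) (j₀ : Fin (n 1))
    (k₀ : Fin (n 2)) : Disjoint (pivotSpan K j₀ k₀) (LinearMap.ker d2) := by
  refine Submodule.range_ker_disjoint ?_
  rw [show d2 ∘ pivotWedge j₀ k₀ = -pivotTarget from funext (d2_pivotWedge hd2 j₀ k₀)]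
  exact linearIndependent_pivotTarget.neg

end Kernel

section Complement

variable (n K) in
noncomputable def spanS : Submodule K (⋀[K]^2 (UU n K)) :=
  span K (S1 n K ∪ S2 n K ∪ S3 n K ∪ S4 n K ∪ S5 n K ∪ S6 n K)

lemma sub_mem_S5_left (i : Fin (n 0)) (j j' : Fin (n 1)) (l : Fin (n 2)) :
    wedge (e01 i j : UU n K) (e12 j l) - wedge (e01 i j') (e12 j' l) ∈ S5 n K :=
  Or.inl ⟨i, l, Pi.single j 1 - Pi.single j' 1, by simp, by
    simp only [Pi.sub_apply, sub_smul (M := ⋀[K]^2 (UU n K)), Finset.sum_sub_distrib,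
      sum_pi_single_smul]⟩

lemma sub_mem_S5_right (i : Fin (n 1)) (k k' : Fin (n 2)) (l : Fin (n 3)) :
    wedge (e12 i k : UU n K) (e23 k l) - wedge (e12 i k') (e23 k' l) ∈ S5 n K :=
  Or.inr ⟨i, l, Pi.single k 1 - Pi.single k' 1, by simp, by
    simp only [Pi.sub_apply, sub_smul (M := ⋀[K]^2 (UU n K)), Finset.sum_sub_distrib,
      sum_pi_single_smul]⟩

lemma sub_mem_S6_left (i : Fin (n 0)) (j j' : Fin (n 1)) (l : Fin (n 3)) :
    wedge (e01 i j : UU n K) (e13 j l) - wedge (e01 i j') (e13 j' l) ∈ S6 n K :=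
  ⟨i, l, Pi.single j 1 - Pi.single j' 1, 0, by simp, by
    simp only [Pi.sub_apply, sub_smul (M := ⋀[K]^2 (UU n K)), Finset.sum_sub_distrib,
      sum_pi_single_smul, Pi.zero_apply, zero_smul, Finset.sum_const_zero, add_zero]⟩

lemma sub_mem_S6_right (i : Fin (n 0)) (k : Fin (n 2)) (j' : Fin (n 1)) (l : Fin (n 3)) :
    wedge (e02 i k : UU n K) (e23 k l) - wedge (e01 i j') (e13 j' l) ∈ S6 n K :=
  ⟨i, l, -Pi.single j' 1, Pi.single k 1, by simp, by
    simp only [Pi.neg_apply, neg_smul (M := ⋀[K]^2 (UU n K)), Finset.sum_neg_distrib,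
      sum_pi_single_smul (M := ⋀[K]^2 (UU n K)), sub_eq_neg_add]⟩

lemma S1_union_S2_subset_spanS : S1 n K ∪ S2 n K ⊆ spanS n K :=
  fun _ h => subset_span <| by simp only [Set.mem_union] at h ⊢; tauto

lemma S3_subset_spanS : S3 n K ⊆ spanS n K :=
  fun _ h => subset_span <| by simp only [Set.mem_union]; tauto

lemma S4_subset_spanS : S4 n K ⊆ spanS n K :=
  fun _ h => subset_span <| by simp only [Set.mem_union]; tauto

lemma S5_subset_spanS : S5 n K ⊆ spanS n K :=
  fun _ h => subset_span <| by simp only [Set.mem_union]; tauto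

lemma S6_subset_spanS : S6 n K ⊆ spanS n K :=
  fun _ h => subset_span <| Set.mem_union_right _ h

variable (j₀ : Fin (n 1)) (k₀ : Fin (n 2))

lemma wedge_e01_e12_mem (i : Fin (n 0)) (j k : Fin (n 1)) (l : Fin (n 2)) :
    wedge (e01 i j : UU n K) (e12 k l) ∈ spanS n K ⊔ pivotSpan K j₀ k₀ := by
  obtain rfl | hjk := eq_or_ne j k
  · exact mem_sup_of_sub_mem (S5_subset_spanS (sub_mem_S5_left i j j₀ l))
      (subset_span ⟨.inl (i, l), rfl⟩)
  · exact mem_sup_left (S3_subset_spanS (Or.inl ⟨i, j, k, l, hjk, rfl⟩))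

lemma wedge_e12_e23_mem (i : Fin (n 1)) (j k : Fin (n 2)) (l : Fin (n 3)) :
    wedge (e12 i j : UU n K) (e23 k l) ∈ spanS n K ⊔ pivotSpan K j₀ k₀ := by
  obtain rfl | hjk := eq_or_ne j k
  · exact mem_sup_of_sub_mem (S5_subset_spanS (sub_mem_S5_right i j k₀ l))
      (subset_span ⟨.inr (.inl (i, l)), rfl⟩)
  · exact mem_sup_left (S3_subset_spanS (Or.inr ⟨i, j, k, l, hjk, rfl⟩))

lemma wedge_e01_e13_mem (i : Fin (n 0)) (j k : Fin (n 1)) (l : Fin (n 3)) :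
    wedge (e01 i j : UU n K) (e13 k l) ∈ spanS n K ⊔ pivotSpan K j₀ k₀ := by
  obtain rfl | hjk := eq_or_ne j k
  · exact mem_sup_of_sub_mem (S6_subset_spanS (sub_mem_S6_left i j j₀ l))
      (subset_span ⟨.inr (.inr (i, l)), rfl⟩)
  · exact mem_sup_left (S4_subset_spanS (Or.inl ⟨i, j, k, l, hjk, rfl⟩))

lemma wedge_e02_e23_mem (i : Fin (n 0)) (j k : Fin (n 2)) (l : Fin (n 3)) :
    wedge (e02 i j : UU n K) (e23 k l) ∈ spanS n K ⊔ pivotSpan K j₀ k₀ := by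
  obtain rfl | hjk := eq_or_ne j k
  · exact mem_sup_of_sub_mem (S6_subset_spanS (sub_mem_S6_right i j j₀ l))
      (subset_span ⟨.inr (.inr (i, l)), rfl⟩)
  · exact mem_sup_left (S4_subset_spanS (Or.inr ⟨i, j, k, l, hjk, rfl⟩))

lemma wedge_eU_eU_mem_of_chain {a b c : Fin 4} (hab : a < b) (hbc : b < c) (i : Fin (n a))
    (j k : Fin (n b)) (l : Fin (n c)) :
    wedge (eU a b hab i j : UU n K) (eU b c hbc k l) ∈ spanS n K ⊔ pivotSpan K j₀ k₀ := by
  obtain ⟨rfl, rfl, rfl⟩ | ⟨rfl, rfl, rfl⟩ | ⟨rfl, rfl, rfl⟩ | ⟨rfl, rfl, rfl⟩ :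
      (a = 0 ∧ b = 1 ∧ c = 2) ∨ (a = 0 ∧ b = 1 ∧ c = 3) ∨ (a = 0 ∧ b = 2 ∧ c = 3) ∨
        (a = 1 ∧ b = 2 ∧ c = 3) := by
    clear i j k l; revert a b c; decide
  exacts [wedge_e01_e12_mem j₀ k₀ i j k l, wedge_e01_e13_mem j₀ k₀ i j k l,
    wedge_e02_e23_mem j₀ k₀ i j k l, wedge_e12_e23_mem j₀ k₀ i j k l]

lemma wedge_mem_spanS_of_inBlock {a b c d : Fin 4} {x y : UU n K} (hx : inBlock a b x)
    (hy : inBlock c d y) (hab : a < b) (hcd : c < d) (hbc : b ≠ c) (hda : d ≠ a) :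
    wedge x y ∈ spanS n K := by
  have hxy : wedge x y ∈ wSet n K a b c d := ⟨x, y, hx, hy, rfl⟩
  have hyx : wedge y x ∈ wSet n K c d a b := ⟨y, x, hy, hx, rfl⟩
  have hx' : wedge x y ∈ {w | ∃ x' y' : UU n K, inBlock a b x' ∧ w = wedge x' y'} :=
    ⟨x, y, hx, rfl⟩
  have hy' : wedge y x ∈ {w | ∃ x' y' : UU n K, inBlock c d x' ∧ w = wedge x' y'} :=
    ⟨y, x, hy, rfl⟩
  -- every pair of commuting blocks occurs, in one order or the other, in `S1` or `S2`
  suffices wedge x y ∈ S1 n K ∪ S2 n K ∨ wedge y x ∈ S1 n K ∪ S2 n K by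
    rcases this with h | h
    · exact S1_union_S2_subset_spanS h
    · simpa [wedge_swap x y] using neg_mem (S1_union_S2_subset_spanS h)
  simp only [S1, S2, Set.mem_union]
  rcases lt_cases_fin_four hab with
      ⟨rfl, rfl⟩ | ⟨rfl, rfl⟩ | ⟨rfl, rfl⟩ | ⟨rfl, rfl⟩ | ⟨rfl, rfl⟩ | ⟨rfl, rfl⟩ <;>
    rcases lt_cases_fin_four hcd with
      ⟨rfl, rfl⟩ | ⟨rfl, rfl⟩ | ⟨rfl, rfl⟩ | ⟨rfl, rfl⟩ | ⟨rfl, rfl⟩ | ⟨rfl, rfl⟩ <;>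
    first
      | exact absurd rfl hbc
      | exact absurd rfl hda
      | simp only [hxy, hyx, hx', hy', true_or, or_true]

lemma wedge_eU_eU_mem {a b c d : Fin 4} (hab : a < b) (hcd : c < d) (i : Fin (n a))
    (j : Fin (n b)) (k : Fin (n c)) (l : Fin (n d)) :
    wedge (eU a b hab i j : UU n K) (eU c d hcd k l) ∈ spanS n K ⊔ pivotSpan K j₀ k₀ := by
  by_cases hbc : b = c
  · subst hbc
    exact wedge_eU_eU_mem_of_chain j₀ k₀ hab hcd i j k l
  by_cases hda : d = a
  · subst hda
    rw [wedge_swap]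
    exact neg_mem (wedge_eU_eU_mem_of_chain j₀ k₀ hcd hab k l i j)
  exact mem_sup_left
    (wedge_mem_spanS_of_inBlock (inBlock_eU hab i j) (inBlock_eU hcd k l) hab hcd hbc hda)

lemma spanS_sup_pivotSpan_eq_top : spanS n K ⊔ pivotSpan K j₀ k₀ = ⊤ :=
  eq_top_of_wedge_mem span_eU_eq_top <| by
    rintro _ ⟨a, b, hab, i, j, rfl⟩ _ ⟨c, d, hcd, k, l, rfl⟩
    exact wedge_eU_eU_mem j₀ k₀ hab hcd i j k l

end Complement

theorem stmt_12_general (n : Fin 4 → ℕ) (h1 : 3 ≤ n 1) (h2 : 3 ≤ n 2) (K : Type*) [Field K] :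
    ∀ d2 : ↥(⋀[K]^2 (UU n K)) →ₗ[K] UU n K,
      (∀ x y : UU n K, d2 (wedge x y) = -⁅x, y⁆) →
      LinearMap.ker d2 =
        Submodule.span K (S1 n K ∪ S2 n K ∪ S3 n K ∪ S4 n K ∪ S5 n K ∪ S6 n K) := by
  intro d2 hd2
  let j₀ : Fin (n 1) := ⟨0, by omega⟩
  let k₀ : Fin (n 2) := ⟨0, by omega⟩
  exact LinearMap.ker_eq_of_sup_eq_top (span_le.mpr (S_subset_ker hd2))
    (disjoint_pivotSpan_ker hd2 j₀ k₀) (spanS_sup_pivotSpan_eq_top j₀ k₀)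

/-- The kernel of `d2 : Λ²𝔲 → 𝔲` (the linear map with `d2(x ∧ y) = −[x, y]`) equals the
`K`-span of `S1 ∪ S2 ∪ S3 ∪ S4 ∪ S5 ∪ S6`. -/
theorem stmt_12 (n : Fin 4 → ℕ) (h0 : 1 ≤ n 0) (h1 : 3 ≤ n 1) (h2 : 3 ≤ n 2)
    (h3 : 1 ≤ n 3) (K : Type*) [Field K] :
    ∀ d2 : ↥(⋀[K]^2 (UU n K)) →ₗ[K] UU n K,
      (∀ x y : UU n K, d2 (wedge x y) = -⁅x, y⁆) →
      LinearMap.ker d2 =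
        Submodule.span K (S1 n K ∪ S2 n K ∪ S3 n K ∪ S4 n K ∪ S5 n K ∪ S6 n K) :=
  stmt_12_general n h1 h2 K
end

section
/- For every x ∈ 𝔲_{13} and every y ∈ 𝔲_{24}, the element x ∧ y lies in Im(d3). -/
/-
By bilinearity of `∧` it suffices to treat matrix units `x = E_{ij}` (`i ∈ I1`, `j ∈ I3`) and
`y = E_{kl}` (`k ∈ I2`, `l ∈ I4`). Since `|I3| ≥ 2` there is `m ∈ I3` with `m ≠ j`; then
`E_{kl} = [E_{km}, E_{ml}]` while `E_{ij}` commutes with both `E_{km}` and `E_{ml}`, so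
`d3 (E_{km} ∧ E_{ml} ∧ E_{ij}) = E_{ij} ∧ E_{kl}`.
-/

attribute [local instance 100] LieRing.ofAssociativeRing

section

open ExteriorAlgebra

variable {n : Fin 4 → ℕ} {K : Type*} [Field K]

lemma coe_wedge (x y : UU n K) :
    (wedge x y : ExteriorAlgebra K (UU n K)) = ι K x * ι K y := by
  simp [wedge, ιMulti_apply]

variable (n K) in
noncomputable def wedgeBilin : UU n K →ₗ[K] UU n K →ₗ[K] ⋀[K]^2 (UU n K) :=
  LinearMap.mk₂ K wedge
    (fun x x' y => Subtype.ext <| by simp [coe_wedge, add_mul])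
    (fun c x y => Subtype.ext <| by simp [coe_wedge])
    (fun x y y' => Subtype.ext <| by simp [coe_wedge, mul_add])
    (fun c x y => Subtype.ext <| by simp [coe_wedge])

@[simp]
lemma wedgeBilin_apply (x y : UU n K) : wedgeBilin n K x y = wedge x y := rfl

@[simp]
lemma wedge_zero_right (x : UU n K) : wedge x 0 = 0 :=
  (wedgeBilin n K x).map_zero

lemma wedge_lie_mem_Imd3_of_lie_eq_zero {s t z : UU n K} (hzs : ⁅z, s⁆ = 0) (htz : ⁅t, z⁆ = 0) :
    wedge z ⁅s, t⁆ ∈ Imd3 n K :=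
  Submodule.subset_span ⟨s, t, z, by simp [hzs, htz]⟩

variable (K) in
def matrixUnit (p q : BIdx n) (h : p.1 < q.1) : UU n K :=
  ⟨Matrix.single p q 1, by
    rintro a b i j hba
    refine Matrix.single_apply_of_ne _ _ _ _ _ fun hpq => not_lt.2 hba ?_
    rwa [hpq.1, hpq.2] at h⟩

@[simp]
lemma coe_matrixUnit (p q : BIdx n) (h : p.1 < q.1) :
    (matrixUnit K p q h : Matrix (BIdx n) (BIdx n) K) = Matrix.single p q 1 := rfl

lemma lie_matrixUnit_matrixUnit_same {p q r : BIdx n} (hpq : p.1 < q.1) (hqr : q.1 < r.1) :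
    ⁅matrixUnit K p q hpq, matrixUnit K q r hqr⁆ = matrixUnit K p r (hpq.trans hqr) := by
  have hrp : r ≠ p := fun h => (hpq.trans hqr).ne (congrArg Sigma.fst h).symm
  ext1
  simp [Ring.lie_def, hrp]

lemma lie_matrixUnit_matrixUnit_of_ne {p q r s : BIdx n} (hpq : p.1 < q.1) (hrs : r.1 < s.1)
    (hqr : q ≠ r) (hsp : s ≠ p) : ⁅matrixUnit K p q hpq, matrixUnit K r s hrs⁆ = 0 := by
  ext1
  simp [Ring.lie_def, hqr, hsp]

lemma wedge_matrixUnit_mem_Imd3 {p q r s : BIdx n} (m : BIdx n) (hpq : p.1 < q.1)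
    (hrm : r.1 < m.1) (hms : m.1 < s.1) (hqr : q ≠ r) (hmp : m ≠ p) (hsp : s ≠ p)
    (hqm : q ≠ m) :
    wedge (matrixUnit K p q hpq) (matrixUnit K r s (hrm.trans hms)) ∈ Imd3 n K := by
  rw [← lie_matrixUnit_matrixUnit_same hrm hms]
  exact wedge_lie_mem_Imd3_of_lie_eq_zero (lie_matrixUnit_matrixUnit_of_ne _ _ hqr hmp)
    (lie_matrixUnit_matrixUnit_of_ne _ _ hsp hqm)

lemma eq_sum_matrixUnit_of_inBlock {a b : Fin 4} (hab : a < b) {x : UU n K}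
    (hx : inBlock a b x) :
    x = ∑ i : Fin (n a), ∑ j : Fin (n b),
      (x : Matrix (BIdx n) (BIdx n) K) ⟨a, i⟩ ⟨b, j⟩ • matrixUnit K ⟨a, i⟩ ⟨b, j⟩ hab := by
  ext1
  ext ⟨c, i'⟩ ⟨d, j'⟩
  simp only [AddSubmonoidClass.coe_finsetSum, SetLike.val_smul, coe_matrixUnit,
    Matrix.sum_apply, Matrix.smul_apply]
  by_cases hcd : c = a ∧ d = b
  · obtain ⟨rfl, rfl⟩ := hcd
    simp [Matrix.single_apply, ite_and]
  · rw [hx c d i' j' hcd]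
    refine (Finset.sum_eq_zero fun i _ => Finset.sum_eq_zero fun j _ => ?_).symm
    rw [Matrix.single_apply_of_ne, smul_zero]
    exact fun h => hcd ⟨(congrArg Sigma.fst h.1).symm, (congrArg Sigma.fst h.2).symm⟩

end

theorem stmt_15_general (n : Fin 4 → ℕ) (h2 : 3 ≤ n 2) (K : Type*) [Field K] :
    ∀ x y : UU n K, inBlock 0 2 x → inBlock 1 3 y → wedge x y ∈ Imd3 n K := by
  intro x y hx hy
  rw [eq_sum_matrixUnit_of_inBlock (by decide) hx, eq_sum_matrixUnit_of_inBlock (by decide) hy]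
  simp only [← wedgeBilin_apply, map_sum, map_smul, LinearMap.sum_apply, LinearMap.smul_apply]
  refine Submodule.sum_mem _ fun k _ => Submodule.sum_mem _ fun l _ => Submodule.smul_mem _ _ <|
    Submodule.sum_mem _ fun i _ => Submodule.sum_mem _ fun j _ => Submodule.smul_mem _ _ ?_
  have : Nontrivial (Fin (n 2)) := Fin.nontrivial_iff_two_le.mpr (by omega)
  obtain ⟨m, hmj⟩ := exists_ne j
  exact wedge_matrixUnit_mem_Imd3 ⟨2, m⟩ _ (show (1 : Fin 4) < 2 by decide)
    (show (2 : Fin 4) < 3 by decide) (by simp) (by simp) (by simp) (by simpa using hmj.symm)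

/-- For every `x ∈ 𝔲_{13}` (block `(0,2)`) and every `y ∈ 𝔲_{24}` (block `(1,3)`),
the element `x ∧ y` lies in `Im(d3)`. -/
theorem stmt_15 (n : Fin 4 → ℕ) (h0 : 1 ≤ n 0) (h1 : 3 ≤ n 1) (h2 : 3 ≤ n 2)
    (h3 : 1 ≤ n 3) (K : Type*) [Field K] :
    ∀ x y : UU n K, inBlock 0 2 x → inBlock 1 3 y → wedge x y ∈ Imd3 n K :=
  stmt_15_general n h2 K
end

section
/- For all w1, w2 ∈ W and every rational t with 0 ≤ t ≤ 1, the vector t·w1 + (1−t)·w2 does not lie in P. (Equivalently: 0 does not lie on the segment joining any two elements of the image of W in the quotient ℚ^{n2+n3}/P.) -/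
/-- The vector `u j` : the `j`-th standard basis vector of the first factor of
`ℚ^{n2} × ℚ^{n3}`. -/
noncomputable def uVec (n2 n3 : ℕ) (j : Fin n2) : (Fin n2 → ℚ) × (Fin n3 → ℚ) :=
  (Pi.single j 1, 0)

/-- The vector `v k` : the `k`-th standard basis vector of the second factor of
`ℚ^{n2} × ℚ^{n3}`. -/
noncomputable def vVec (n2 n3 : ℕ) (k : Fin n3) : (Fin n2 → ℚ) × (Fin n3 → ℚ) :=
  (0, Pi.single k 1)

/-- The plane `P` spanned by `u_1 + ⋯ + u_{n2}` and `v_1 + ⋯ + v_{n3}`. -/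
noncomputable def Pplane (n2 n3 : ℕ) : Submodule ℚ ((Fin n2 → ℚ) × (Fin n3 → ℚ)) :=
  Submodule.span ℚ {(∑ j, uVec n2 n3 j), (∑ k, vVec n2 n3 k)}

/-- The set `W` of weights: `−u_j`, `u_j − v_k`, `v_k`. -/
noncomputable def Wset (n2 n3 : ℕ) : Set ((Fin n2 → ℚ) × (Fin n3 → ℚ)) :=
  {w | ∃ j : Fin n2, w = -uVec n2 n3 j} ∪
  {w | ∃ (j : Fin n2) (k : Fin n3), w = uVec n2 n3 j - vVec n2 n3 k} ∪
  {w | ∃ k : Fin n3, w = vVec n2 n3 k}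

lemma exists_ne_ne {n : ℕ} (h : 3 ≤ n) (a b : Fin n) : ∃ c : Fin n, c ≠ a ∧ c ≠ b := by
  have hsub : ({a, b} : Finset (Fin n)) ⊆ Finset.univ := Finset.subset_univ _
  have hcard : ((Finset.univ : Finset (Fin n)) \ {a, b}).card =
      n - ({a, b} : Finset (Fin n)).card := by
    rw [Finset.card_sdiff_of_subset hsub, Finset.card_univ, Fintype.card_fin]
  have hcb : ({a, b} : Finset (Fin n)).card ≤ 2 :=
    (Finset.card_insert_le _ _).trans (by simp)
  have hpos : 0 < ((Finset.univ : Finset (Fin n)) \ {a, b}).card := by omega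
  obtain ⟨c, hc⟩ := Finset.card_pos.mp hpos
  simp only [Finset.mem_sdiff, Finset.mem_insert, Finset.mem_singleton] at hc
  exact ⟨c, fun h => hc.2 (Or.inl h), fun h => hc.2 (Or.inr h)⟩

lemma wform {n2 n3 : ℕ} {w : (Fin n2 → ℚ) × (Fin n3 → ℚ)} (hw : w ∈ Wset n2 n3)
    (j0 : Fin n2) (k0 : Fin n3) :
    ∃ (j : Fin n2) (k : Fin n3) (c d : ℚ),
      w = (c • (Pi.single j 1 : Fin n2 → ℚ), d • (Pi.single k 1 : Fin n3 → ℚ)) ∧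
      ((c = -1 ∧ d = 0) ∨ (c = 1 ∧ d = -1) ∨ (c = 0 ∧ d = 1)) := by
  rcases hw with (⟨j, rfl⟩ | ⟨j, k, rfl⟩) | ⟨k, rfl⟩
  · exact ⟨j, k0, -1, 0, by simp [uVec, Prod.ext_iff], Or.inl ⟨rfl, rfl⟩⟩
  · exact ⟨j, k, 1, -1, by simp [uVec, vVec, Prod.ext_iff, sub_eq_add_neg],
      Or.inr (Or.inl ⟨rfl, rfl⟩)⟩
  · exact ⟨j0, k, 0, 1, by simp [uVec, vVec, Prod.ext_iff], Or.inr (Or.inr ⟨rfl, rfl⟩)⟩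


/-- For all `w1, w2 ∈ W` and every rational `t` with `0 ≤ t ≤ 1`, the vector
`t·w1 + (1−t)·w2` does not lie in `P`. -/
theorem stmt_18 (n2 n3 : ℕ) (h2 : 3 ≤ n2) (h3 : 3 ≤ n3) :
    ∀ w1 ∈ Wset n2 n3, ∀ w2 ∈ Wset n2 n3, ∀ t : ℚ, 0 ≤ t → t ≤ 1 →
      t • w1 + (1 - t) • w2 ∉ Pplane n2 n3 := by
  have hj0 : (0 : ℕ) < n2 := by omega
  have hk0 : (0 : ℕ) < n3 := by omega
  intro w1 hw1 w2 hw2 t ht0 ht1 hmem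
  obtain ⟨j1, k1, c1, d1, rfl, hcd1⟩ := wform hw1 ⟨0, hj0⟩ ⟨0, hk0⟩
  obtain ⟨j2, k2, c2, d2, rfl, hcd2⟩ := wform hw2 ⟨0, hj0⟩ ⟨0, hk0⟩
  rw [Pplane, Submodule.mem_span_pair] at hmem
  obtain ⟨a, b, hab⟩ := hmem
  have hs1 : ∑ j : Fin n2, (Pi.single j (1:ℚ) : Fin n2 → ℚ) = fun _ => 1 :=
    Finset.univ_sum_single fun _ => (1 : ℚ)
  have hs2 : ∑ k : Fin n3, (Pi.single k (1:ℚ) : Fin n3 → ℚ) = fun _ => 1 :=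
    Finset.univ_sum_single fun _ => (1 : ℚ)
  have hsum1 : (∑ j, uVec n2 n3 j) = ((fun _ => 1 : Fin n2 → ℚ), 0) := by
    rw [Prod.ext_iff, Prod.fst_sum, Prod.snd_sum]
    simp [uVec, hs1]
  have hsum2 : (∑ k, vVec n2 n3 k) = (0, (fun _ => 1 : Fin n3 → ℚ)) := by
    rw [Prod.ext_iff, Prod.fst_sum, Prod.snd_sum]
    simp [vVec, hs2]
  rw [hsum1, hsum2] at hab
  have h1 : ∀ j : Fin n2,
      a = t * (c1 * (Pi.single j1 1 : Fin n2 → ℚ) j) + (1 - t) * (c2 * (Pi.single j2 1 : Fin n2 → ℚ) j) := by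
    intro j
    have := congrFun (congrArg Prod.fst hab) j
    simpa [mul_assoc] using this
  have h2' : ∀ k : Fin n3,
      b = t * (d1 * (Pi.single k1 1 : Fin n3 → ℚ) k) + (1 - t) * (d2 * (Pi.single k2 1 : Fin n3 → ℚ) k) := by
    intro k
    have := congrFun (congrArg Prod.snd hab) k
    simpa [mul_assoc] using this
  obtain ⟨j0, hja, hjb⟩ := exists_ne_ne h2 j1 j2
  obtain ⟨k0', hka, hkb⟩ := exists_ne_ne h3 k1 k2
  have ha : a = 0 := by
    have := h1 j0
    simpa [Pi.single_apply, hja, hjb] using this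
  have hb : b = 0 := by
    have := h2' k0'
    simpa [Pi.single_apply, hka, hkb] using this
  have e1 : t * c1 + (1 - t) * c2 = 0 := by
    by_cases hj : j1 = j2
    · have := h1 j1
      subst hj
      simp [Pi.single_apply, ha] at this
      linarith
    · have ha1 := h1 j1
      have ha2 := h1 j2
      simp [Pi.single_apply, hj, ha] at ha1
      simp [Pi.single_apply, Ne.symm hj, ha] at ha2
      rcases ha1 with h | h <;> rcases ha2 with h' | h' <;>
        simp [h, h'] <;> linarith
  have e2 : t * d1 + (1 - t) * d2 = 0 := by
    by_cases hk : k1 = k2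
    · have := h2' k1
      subst hk
      simp [Pi.single_apply, hb] at this
      linarith
    · have hb1 := h2' k1
      have hb2 := h2' k2
      simp [Pi.single_apply, hk, hb] at hb1
      simp [Pi.single_apply, Ne.symm hk, hb] at hb2
      rcases hb1 with h | h <;> rcases hb2 with h' | h' <;>
        simp [h, h'] <;> linarith
  rcases hcd1 with ⟨rfl, rfl⟩ | ⟨rfl, rfl⟩ | ⟨rfl, rfl⟩ <;>
    rcases hcd2 with ⟨rfl, rfl⟩ | ⟨rfl, rfl⟩ | ⟨rfl, rfl⟩ <;>
    linarith
end
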